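/- arXiv:1902.09058 — 3 statements merged into one kernel-verified Lean document; each statement's English description precedes it below -/
import Mathlib

section
/- Every complex root of the polynomial p(t) = t^3 - t^2 - t - 1 other than its unique real root is non-real and has complex absolute value strictly less than 1. -/
/-!
The real cubic `x³ - x² - x - 1` is negative on `(-∞, 1]` and increasing on `[1, ∞)`, so it has
exactly one real root `α`, and `α > 1`. Dividing out `z - α` leaves the real quadratic
`z² + (α - 1) z + (α² - α - 1)`; its roots are not real, hence conjugate, with
`|z|² = α² - α - 1`. Since `α (α² - α - 1) = 1`, this is `1 / α < 1`.
-/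

lemma one_lt_of_cubic_eq_zero {a : ℝ} (h : a ^ 3 - a ^ 2 - a - 1 = 0) : 1 < a := by
  nlinarith [sq_nonneg a, sq_nonneg (a - 1), sq_nonneg (a + 1), sq_nonneg (a * a)]

lemma exists_cubic_eq_zero : ∃ a : ℝ, a ^ 3 - a ^ 2 - a - 1 = 0 := by
  have hcont : ContinuousOn (fun x : ℝ => x ^ 3 - x ^ 2 - x - 1) (Set.Icc 1 2) := by fun_prop
  obtain ⟨a, -, ha⟩ := intermediate_value_Icc (by norm_num : (1 : ℝ) ≤ 2) hcont
    (by norm_num : (0 : ℝ) ∈ Set.Icc (1 ^ 3 - 1 ^ 2 - 1 - 1) (2 ^ 3 - 2 ^ 2 - 2 - 1))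
  exact ⟨a, ha⟩

lemma eq_of_cubic_eq_zero {a b : ℝ} (ha : a ^ 3 - a ^ 2 - a - 1 = 0)
    (hb : b ^ 3 - b ^ 2 - b - 1 = 0) : a = b := by
  have ha1 := one_lt_of_cubic_eq_zero ha
  have hb1 := one_lt_of_cubic_eq_zero hb
  have hpos : 0 < a ^ 2 + a * b + b ^ 2 - a - b - 1 := by nlinarith
  have hfac : (a - b) * (a ^ 2 + a * b + b ^ 2 - a - b - 1) = 0 := by
    linear_combination ha - hb
  exact sub_eq_zero.1 ((mul_eq_zero.1 hfac).resolve_right hpos.ne')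

lemma quadratic_eq_zero_of_cubic_eq_zero {R : Type*} [CommRing R] [NoZeroDivisors R] {a z : R}
    (ha : a ^ 3 - a ^ 2 - a - 1 = 0) (hz : z ^ 3 - z ^ 2 - z - 1 = 0) (hne : z ≠ a) :
    z ^ 2 + (a - 1) * z + (a ^ 2 - a - 1) = 0 := by
  have hfac : (z - a) * (z ^ 2 + (a - 1) * z + (a ^ 2 - a - 1)) = 0 := by
    linear_combination hz - ha
  exact (mul_eq_zero.1 hfac).resolve_left (sub_ne_zero.2 hne)

lemma Complex.normSq_eq_of_quadratic_eq_zero {b c : ℝ} {z : ℂ}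
    (hz : z ^ 2 + b * z + c = 0) (him : z.im ≠ 0) : Complex.normSq z = c := by
  have hre := congrArg Complex.re hz
  have hy := congrArg Complex.im hz
  simp only [sq, Complex.add_re, Complex.add_im, Complex.mul_re, Complex.mul_im,
    Complex.ofReal_re, Complex.ofReal_im, Complex.zero_re, Complex.zero_im] at hre hy
  have hx : 2 * z.re + b = 0 :=
    (mul_eq_zero.1 (by linear_combination hy : z.im * (2 * z.re + b) = 0)).resolve_left him
  rw [Complex.normSq_apply]
  linear_combination z.re * hx - hre

/-- Every complex root of p(t) = t^3 - t^2 - t - 1 other than its unique real root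
is non-real and has complex absolute value strictly less than 1. -/
theorem three_point_secant_complex_roots :
    (∃! α : ℝ, α ^ 3 - α ^ 2 - α - 1 = 0) ∧
    (∀ α : ℝ, α ^ 3 - α ^ 2 - α - 1 = 0 →
      ∀ z : ℂ, z ^ 3 - z ^ 2 - z - 1 = 0 → z ≠ (α : ℂ) →
        z.im ≠ 0 ∧ ‖z‖ < 1) := by
  obtain ⟨a, ha⟩ := exists_cubic_eq_zero
  refine ⟨⟨a, ha, fun b hb => eq_of_cubic_eq_zero hb ha⟩, fun α hα z hz hne => ?_⟩
  have him : z.im ≠ 0 := by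
    intro h
    have hzre : z = (z.re : ℂ) := Complex.ext rfl (by simp [h])
    rw [hzre] at hz hne
    exact hne (congrArg _ (eq_of_cubic_eq_zero (by exact_mod_cast hz) hα))
  have hαC : (α : ℂ) ^ 3 - (α : ℂ) ^ 2 - α - 1 = 0 := by exact_mod_cast hα
  have hq := quadratic_eq_zero_of_cubic_eq_zero hαC hz hne
  have hnormSq : Complex.normSq z = α ^ 2 - α - 1 :=
    Complex.normSq_eq_of_quadratic_eq_zero (b := α - 1) (by push_cast; exact hq) him
  have hα1 := one_lt_of_cubic_eq_zero hα
  refine ⟨him, ?_⟩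
  have hsq : ‖z‖ ^ 2 < 1 := by
    rw [Complex.sq_norm, hnormSq]
    nlinarith
  nlinarith [norm_nonneg z]
end

section
/- The unique real root α of the polynomial p(t) = t^3 - t^2 - t - 1 satisfies (1 + √5)/2 < α < 2; that is, the order of convergence of the three-point Secant method lies strictly between the order of convergence of the Secant method (the golden ratio) and that of Newton's method (which is 2). -/
/-!
Write `p t = t³ - t² - t - 1`. On `t ≤ 1` it is negative, and on `[1, ∞)` it is strictly
increasing, since `p b - p a = (b - a) ((b² - b) + (a² - a) + (a b - 1))`; so `p` has at
most one real root and it lies in `(1, ∞)`. From `φ² = φ + 1` one gets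
`p φ = φ (φ² - φ - 1) - 1 = -1`, while `p 2 = 1`, so the intermediate value theorem places
the root strictly between `φ` and `2`.
-/

open Real Set
open scoped goldenRatio

def tribonacciCubic (t : ℝ) : ℝ := t ^ 3 - t ^ 2 - t - 1

namespace tribonacciCubic

lemma neg_of_le_one {t : ℝ} (ht : t ≤ 1) : tribonacciCubic t < 0 := by
  unfold tribonacciCubic
  nlinarith [sq_nonneg t, sq_nonneg (t + 1), mul_nonneg (sq_nonneg t) (sub_nonneg.2 ht)]

lemma strictMonoOn_Ici_one : StrictMonoOn tribonacciCubic (Ici 1) := by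
  intro a (ha : 1 ≤ a) b (hb : 1 ≤ b) hab
  have hdiff : tribonacciCubic b - tribonacciCubic a =
      (b - a) * ((b ^ 2 - b) + (a ^ 2 - a) + (a * b - 1)) := by
    unfold tribonacciCubic; ring
  have hfactor : 0 < (b ^ 2 - b) + (a ^ 2 - a) + (a * b - 1) := by nlinarith
  nlinarith [mul_pos (sub_pos.2 hab) hfactor]

lemma one_lt_of_eq_zero {t : ℝ} (ht : tribonacciCubic t = 0) : 1 < t :=
  lt_of_not_ge fun h => (neg_of_le_one h).ne ht

lemma eval_goldenRatio : tribonacciCubic φ = -1 := by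
  unfold tribonacciCubic
  linear_combination φ * goldenRatio_sq

lemma eval_two : tribonacciCubic 2 = 1 := by norm_num [tribonacciCubic]

lemma mem_Ioo_of_eq_zero {t : ℝ} (ht : tribonacciCubic t = 0) : t ∈ Ioo φ 2 := by
  have h1 : (1 : ℝ) ≤ t := (one_lt_of_eq_zero ht).le
  constructor
  · refine (strictMonoOn_Ici_one.lt_iff_lt one_lt_goldenRatio.le h1).1 ?_
    rw [eval_goldenRatio, ht]; norm_num
  · refine (strictMonoOn_Ici_one.lt_iff_lt h1 (by norm_num : (1 : ℝ) ≤ 2)).1 ?_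
    rw [eval_two, ht]; norm_num

lemma exists_eq_zero : ∃ t, tribonacciCubic t = 0 := by
  have hcont : ContinuousOn tribonacciCubic (Icc φ 2) := by
    unfold tribonacciCubic; fun_prop
  have hzero : (0 : ℝ) ∈ Icc (tribonacciCubic φ) (tribonacciCubic 2) := by
    rw [eval_goldenRatio, eval_two]; norm_num
  obtain ⟨t, -, ht⟩ := intermediate_value_Icc goldenRatio_lt_two.le hcont hzero
  exact ⟨t, ht⟩

lemma existsUnique_eq_zero : ∃! t, tribonacciCubic t = 0 := by
  obtain ⟨t, ht⟩ := exists_eq_zero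
  refine ⟨t, ht, fun s hs => strictMonoOn_Ici_one.injOn ?_ ?_ (hs.trans ht.symm)⟩
  · exact (one_lt_of_eq_zero hs).le
  · exact (one_lt_of_eq_zero ht).le

end tribonacciCubic

/-- The unique real root α of p(t) = t^3 - t^2 - t - 1 satisfies
(1 + √5)/2 < α < 2: the order of convergence of the three-point Secant method
lies strictly between the golden ratio (order of the Secant method) and 2
(order of Newton's method). -/
theorem three_point_secant_order_between_secant_and_newton :
    (∃! α : ℝ, α ^ 3 - α ^ 2 - α - 1 = 0) ∧
    (∀ α : ℝ, α ^ 3 - α ^ 2 - α - 1 = 0 →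
      (1 + Real.sqrt 5) / 2 < α ∧ α < 2) :=
  ⟨tribonacciCubic.existsUnique_eq_zero,
    fun _ hα => tribonacciCubic.mem_Ioo_of_eq_zero hα⟩
end

section
/- Let C > 0 and let (e_k) be a sequence of positive real numbers satisfying e₍k+1₎ = C · e_k · e₍k-1₎ · e₍k-2₎ for all k ≥ 2, and suppose √C · e_i < 1 for i = 0, 1, 2. Then e_k tends to 0, and the ratio log(e₍k+1₎)/log(e_k) converges to the unique real root α of α³ - α² - α - 1 = 0 (α ≈ 1.83929). -/
/-!
The sequence `x k = -log (√C e k)` satisfies the tribonacci recurrence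
`x (k+3) = x (k+2) + x (k+1) + x k` with `x 0, x 1, x 2 > 0`, so it grows at least
linearly. For a root `α` of `t³ - t² - t - 1 = (t - α) (t² + (α - 1) t + (α² - α - 1))`,
the sequence `v k = x (k+1) - α x k` solves `v (k+2) = -p v (k+1) - q v k` with
`p = α - 1`, `q = α² - α - 1`, whose characteristic roots are complex of modulus
`√q = α^(-1/2) < 1`. The positive definite form `b² + p a b + q a²` evaluated at
`(v k, v (k+1))` is multiplied by `q` at each step, so `v` stays bounded; with `x → ∞`
this forces `x (k+1) / x k → α`, and `-log e k` differs from `x k` only by the constant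
`log √C`.
-/

open Filter Topology

lemma tribonacci_root_bounds {α : ℝ} (hα : α ^ 3 - α ^ 2 - α - 1 = 0) :
    5 / 3 < α ∧ α < 2 := by
  constructor <;> nlinarith [sq_nonneg (α + 1 / 3), sq_nonneg (α - 5 / 3), sq_nonneg (α - 2)]

lemma exists_abs_le_of_linear_recurrence_two {p q : ℝ} (hq : q ≤ 1) (hdisc : p ^ 2 < 4 * q)
    {v : ℕ → ℝ} (hv : ∀ k, v (k + 2) = -p * v (k + 1) - q * v k) :
    ∃ K, ∀ k, |v k| ≤ K := by
  set Q : ℕ → ℝ := fun k => v (k + 1) ^ 2 + p * v k * v (k + 1) + q * v k ^ 2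
  have hQ_sq : ∀ k, (4 * q - p ^ 2) * v k ^ 2 ≤ 4 * Q k := fun k => by
    nlinarith [sq_nonneg (2 * v (k + 1) + p * v k)]
  have hQ_nonneg : ∀ k, 0 ≤ Q k := fun k => by
    nlinarith [hQ_sq k, sq_nonneg (v k)]
  have hQ_succ : ∀ k, Q (k + 1) = q * Q k := fun k => by
    simp only [Q, hv k]; ring
  have hQ_anti : Antitone Q := antitone_nat_of_succ_le fun k => by
    rw [hQ_succ k]; nlinarith [hQ_nonneg k]
  refine ⟨Real.sqrt (4 * Q 0 / (4 * q - p ^ 2)), fun k => Real.abs_le_sqrt ?_⟩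
  rw [le_div_iff₀ (by linarith)]
  nlinarith [hQ_sq k, hQ_anti (Nat.zero_le k)]

section Tribonacci

variable {x : ℕ → ℝ} (hrec : ∀ k, x (k + 3) = x (k + 2) + x (k + 1) + x k)
include hrec

lemma tribonacci_exists_abs_sub_mul_root_le {α : ℝ} (hα : α ^ 3 - α ^ 2 - α - 1 = 0) :
    ∃ K, ∀ k, |x (k + 1) - α * x k| ≤ K := by
  obtain ⟨hα_lo, hα_hi⟩ := tribonacci_root_bounds hα
  refine exists_abs_le_of_linear_recurrence_two (p := α - 1) (q := α ^ 2 - α - 1)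
    (by nlinarith) (by nlinarith) fun k => ?_
  linear_combination hrec k - x k * hα

lemma tribonacci_linear_lower_bound {m : ℝ} (hm : 0 ≤ m)
    (h0 : m ≤ x 0) (h1 : m ≤ x 1) (h2 : m ≤ x 2) : ∀ k : ℕ, m * (k + 1) / 3 ≤ x k
  | 0 => by push_cast; linarith
  | 1 => by push_cast; linarith
  | 2 => by push_cast; linarith
  | k + 3 => by
    have := tribonacci_linear_lower_bound hm h0 h1 h2 k
    have := tribonacci_linear_lower_bound hm h0 h1 h2 (k + 1)
    have := tribonacci_linear_lower_bound hm h0 h1 h2 (k + 2)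
    push_cast at *
    rw [hrec k]
    nlinarith [mul_nonneg hm k.cast_nonneg]

lemma tribonacci_tendsto_atTop (h0 : 0 < x 0) (h1 : 0 < x 1) (h2 : 0 < x 2) :
    Tendsto x atTop atTop := by
  set m := min (x 0) (min (x 1) (x 2))
  have hm : 0 < m := lt_min h0 (lt_min h1 h2)
  have hbound := tribonacci_linear_lower_bound hrec hm.le (min_le_left _ _)
    ((min_le_right _ _).trans (min_le_left _ _)) ((min_le_right _ _).trans (min_le_right _ _))
  refine tendsto_atTop_mono hbound (Tendsto.atTop_div_const (by norm_num) ?_)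
  exact Tendsto.const_mul_atTop hm (tendsto_atTop_add_const_right _ 1 tendsto_natCast_atTop_atTop)

end Tribonacci

lemma tendsto_succ_div_of_abs_sub_mul_le {y : ℕ → ℝ} {α K : ℝ} (hy : Tendsto y atTop atTop)
    (hK : ∀ k, |y (k + 1) - α * y k| ≤ K) :
    Tendsto (fun k => y (k + 1) / y k) atTop (𝓝 α) := by
  have hsmall : Tendsto (fun k => (y (k + 1) - α * y k) * (y k)⁻¹) atTop (𝓝 0) :=
    isBoundedUnder_le_mul_tendsto_zero (isBoundedUnder_of ⟨K, hK⟩)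
      (tendsto_inv_atTop_zero.comp hy)
  have heq : ∀ᶠ k in atTop, α + (y (k + 1) - α * y k) * (y k)⁻¹ = y (k + 1) / y k := by
    filter_upwards [hy.eventually_gt_atTop 0] with k hk
    field_simp
    ring
  simpa using (hsmall.const_add α).congr' heq

lemma neg_log_sqrt_mul_tribonacci {C : ℝ} (hC : 0 < C) {e : ℕ → ℝ} (hpos : ∀ k, 0 < e k)
    (hrec : ∀ k, e (k + 3) = C * e (k + 2) * e (k + 1) * e k) (k : ℕ) :
    -Real.log (Real.sqrt C * e (k + 3)) = -Real.log (Real.sqrt C * e (k + 2))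
      + -Real.log (Real.sqrt C * e (k + 1)) + -Real.log (Real.sqrt C * e k) := by
  have hs : 0 < Real.sqrt C := Real.sqrt_pos.2 hC
  have hprod : Real.sqrt C * e (k + 3)
      = Real.sqrt C * e (k + 2) * (Real.sqrt C * e (k + 1)) * (Real.sqrt C * e k) := by
    rw [hrec k]
    linear_combination (-(Real.sqrt C * e (k + 2) * e (k + 1) * e k)) * Real.sq_sqrt hC.le
  have := hpos k; have := hpos (k + 1); have := hpos (k + 2)
  rw [hprod, Real.log_mul (by positivity) (by positivity),
    Real.log_mul (by positivity) (by positivity)]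
  ring

/-- If e₍k+1₎ = C·e_k·e₍k-1₎·e₍k-2₎ with C > 0, all e_k > 0, and √C·e_i < 1 for
i = 0, 1, 2, then e_k → 0 and log(e₍k+1₎)/log(e_k) converges to the unique real
root of α³ - α² - α - 1 = 0. -/
theorem three_point_secant_error_recurrence_order
    (C : ℝ) (hC : 0 < C) (e : ℕ → ℝ) (hpos : ∀ k, 0 < e k)
    (hrec : ∀ k, e (k + 3) = C * e (k + 2) * e (k + 1) * e k)
    (h0 : Real.sqrt C * e 0 < 1) (h1 : Real.sqrt C * e 1 < 1)
    (h2 : Real.sqrt C * e 2 < 1) :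
    Tendsto e atTop (nhds 0) ∧
    ∀ α : ℝ, α ^ 3 - α ^ 2 - α - 1 = 0 →
      Tendsto (fun k => Real.log (e (k + 1)) / Real.log (e k)) atTop (nhds α) := by
  set c := Real.log (Real.sqrt C)
  set x : ℕ → ℝ := fun k => -Real.log (Real.sqrt C * e k)
  have hx_rec : ∀ k, x (k + 3) = x (k + 2) + x (k + 1) + x k :=
    neg_log_sqrt_mul_tribonacci hC hpos hrec
  have hx_pos : ∀ {i}, Real.sqrt C * e i < 1 → 0 < x i := fun h =>
    neg_pos.2 (Real.log_neg (mul_pos (Real.sqrt_pos.2 hC) (hpos _)) h)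
  have hlog : ∀ k, -Real.log (e k) = x k + c := fun k => by
    simp only [x, c, Real.log_mul (Real.sqrt_pos.2 hC).ne' (hpos k).ne']; ring
  have hy_top : Tendsto (fun k => -Real.log (e k)) atTop atTop := by
    simpa only [hlog] using tendsto_atTop_add_const_right _ c
      (tribonacci_tendsto_atTop hx_rec (hx_pos h0) (hx_pos h1) (hx_pos h2))
  refine ⟨?_, fun α hα => ?_⟩
  · exact (Real.tendsto_exp_atBot.comp (tendsto_neg_atTop_atBot.comp hy_top)).congr
      fun k => by simp [Real.exp_log (hpos k)]
  · obtain ⟨K, hK⟩ := tribonacci_exists_abs_sub_mul_root_le hx_rec hα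
    have hy_bound : ∀ k, |-Real.log (e (k + 1)) - α * -Real.log (e k)| ≤ K + |(1 - α) * c| :=
      fun k => by
        rw [hlog, hlog, show x (k + 1) + c - α * (x k + c) = x (k + 1) - α * x k + (1 - α) * c by
          ring]
        exact (abs_add_le _ _).trans (by linarith [hK k])
    simpa only [neg_div_neg_eq] using tendsto_succ_div_of_abs_sub_mul_le hy_top hy_bound
end
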